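/- arXiv:0906.5129 — 2 statements merged into one kernel-verified Lean document; each statement's English description precedes it below -/
import Mathlib

section
/- Let a = (a_1,...,a_s) ∈ ℕ^s with |a| = d, and suppose a_j - a_i ≥ 2 for some indices i, j. Let a' = a + e_i - e_j. Then x_{a'} ≺_Γ x_a, i.e., Γ(a) <_lex Γ(a'). -/
open MvPolynomial

/-- A term order on monomials (exponent vectors) of `MvPolynomial σ K`. -/
structure TermOrder (σ : Type*) where
  lo : LinearOrder (σ →₀ ℕ)
  zero_le : ∀ a : σ →₀ ℕ, lo.le 0 a
  add_lt : ∀ a b c : σ →₀ ℕ, lo.lt a b → lo.lt (a + c) (b + c)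

/-- The exponent vector of the initial (leading) term of `f`. -/
noncomputable def TermOrder.lead {σ K : Type*} [Field K]
    (t : TermOrder σ) (f : MvPolynomial σ K) : σ →₀ ℕ :=
  letI := t.lo
  WithBot.unbotD 0 f.support.max

/-- The initial ideal of `I` w.r.t. the term order `t`. -/
noncomputable def initialIdeal {σ K : Type*} [Field K]
    (t : TermOrder σ) (I : Ideal (MvPolynomial σ K)) : Ideal (MvPolynomial σ K) :=
  Ideal.span { m : MvPolynomial σ K | ∃ f ∈ I, f ≠ 0 ∧ m = monomial (t.lead f) (1 : K) }

/-- `G` is a Gröbner basis of `I` w.r.t. `t`. -/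
def IsGB {σ K : Type*} [Field K] (t : TermOrder σ)
    (I : Ideal (MvPolynomial σ K)) (G : Set (MvPolynomial σ K)) : Prop :=
  G ⊆ (I : Set (MvPolynomial σ K)) ∧
    initialIdeal t I = Ideal.span ((fun g => monomial (t.lead g) (1 : K)) '' G)

/-- Total degree of an exponent vector. -/
def Fdeg {σ : Type*} (m : σ →₀ ℕ) : ℕ := m.sum fun _ n => n

/-- `t` is a reverse lexicographic order w.r.t. the strict variable order `vlt`. -/
def IsRevLex {σ : Type*} (vlt : σ → σ → Prop) (t : TermOrder σ) : Prop :=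
  ∀ α β : σ →₀ ℕ, t.lo.lt α β ↔
    Fdeg α < Fdeg β ∨
      (Fdeg α = Fdeg β ∧ ∃ j, β j < α j ∧ ∀ k, vlt k j → α k = β k)

/-- Variables of `R^[d]`: exponent vectors of degree `d` monomials of `K[y_1,…,y_s]`. -/
abbrev Vd (s d : ℕ) := {a : Fin s → ℕ // ∑ i, a i = d}

/-- The map `φ_d : R^[d] → S`, `x_a ↦ y^a`. -/
noncomputable def phi (K : Type*) [Field K] (s d : ℕ) :
    MvPolynomial (Vd s d) K →ₐ[K] MvPolynomial (Fin s) K :=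
  aeval fun a : Vd s d => ∏ i, X i ^ a.1 i

/-- Lexicographic strict order on `Fin s → ℕ`. -/
def lexLt {s : ℕ} (a b : Fin s → ℕ) : Prop :=
  ∃ j, (∀ i, i < j → a i = b i) ∧ a j < b j

/-- `Γ(a)`: the nondecreasing rearrangement of `a`. -/
noncomputable def Gam {s : ℕ} (a : Fin s → ℕ) : Fin s → ℕ := a ∘ Tuple.sort a

/-- The order on the variables of `R^[d]` : `x_a ≺_Γ x_b` iff `Γ(b) <lex Γ(a)`,
or `Γ(b) = Γ(a)` and `b <lex a`. -/
def varGammaLt {s : ℕ} (a b : Fin s → ℕ) : Prop :=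
  lexLt (Gam b) (Gam a) ∨ (Gam b = Gam a ∧ lexLt b a)

/-- `v` is `mv_{≺_Γ}(u)`: the `≺_Γ`-smallest variable `x_c` with `y^c ∣ φ_d(u)`. -/
def IsMvGamma {K : Type*} [Field K] {s d : ℕ} (u : Vd s d →₀ ℕ) (v : Vd s d) : Prop :=
  (∏ i, (X i : MvPolynomial (Fin s) K) ^ v.1 i) ∣ phi K s d (monomial u 1) ∧
    ∀ c : Vd s d, (∏ i, (X i : MvPolynomial (Fin s) K) ^ c.1 i) ∣ phi K s d (monomial u 1) →
      v = c ∨ varGammaLt v.1 c.1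

/-- Count of entries `≤ v`. -/
private def cnt {s : ℕ} (f : Fin s → ℕ) (v : ℕ) : ℕ :=
  (Finset.univ.filter (fun i => f i ≤ v)).card

private lemma cnt_comp_equiv {s : ℕ} (f : Fin s → ℕ) (σ : Equiv.Perm (Fin s)) (v : ℕ) :
    cnt (f ∘ σ) v = cnt f v := by
  unfold cnt
  apply Finset.card_bij (fun i _ => σ i)
  · intro i hi
    simpa using (Finset.mem_filter.1 hi).2
  · intro i _ i' _ hii'
    exact σ.injective hii'
  · intro b hb
    exact ⟨σ.symm b, by simpa using (Finset.mem_filter.1 hb).2, by simp⟩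

private lemma le_iff_lt_cnt {s : ℕ} {h : Fin s → ℕ} (hm : Monotone h) (w : ℕ) (i : Fin s) :
    h i ≤ w ↔ (i : ℕ) < cnt h w := by
  unfold cnt
  constructor
  · intro hi
    have hsub : Finset.Iic i ⊆ Finset.univ.filter (fun i' => h i' ≤ w) := by
      intro i' hi'
      simp only [Finset.mem_filter, Finset.mem_univ, true_and]
      exact le_trans (hm (Finset.mem_Iic.1 hi')) hi
    have := Finset.card_le_card hsub
    rw [Fin.card_Iic] at this
    omega
  · intro hi
    by_contra hcon
    push_neg at hcon
    have hsub : Finset.univ.filter (fun i' => h i' ≤ w) ⊆ Finset.Iio i := by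
      intro i' hi'
      simp only [Finset.mem_filter, Finset.mem_univ, true_and] at hi'
      rw [Finset.mem_Iio]
      by_contra hge
      push_neg at hge
      exact absurd (le_trans (hm hge) hi') (by omega)
    have := Finset.card_le_card hsub
    rw [Fin.card_Iio] at this
    omega

private lemma lexLt_of_cnt {s : ℕ} {g g' : Fin s → ℕ} (hg : Monotone g) (hg' : Monotone g')
    (v : ℕ) (hv : cnt g' v < cnt g v) (hw : ∀ w, w < v → cnt g w = cnt g' w) :
    lexLt g g' := by
  have hcle : cnt g v ≤ s := by
    have := Finset.card_filter_le Finset.univ (fun i => g i ≤ v)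
    simpa [cnt] using this
  set t : ℕ := cnt g' v with ht
  have hts : t < s := by omega
  refine ⟨⟨t, hts⟩, ?_, ?_⟩
  · intro i hi
    have hival : (i : ℕ) < t := hi
    have hgi : g i ≤ v := (le_iff_lt_cnt hg v i).2 (by omega)
    have hg'i : g' i ≤ v := (le_iff_lt_cnt hg' v i).2 (by omega)
    rcases lt_trichotomy (g i) (g' i) with hlt | heq | hgt
    · exfalso
      have hgiv : g i < v := lt_of_lt_of_le hlt hg'i
      have h1 : (i : ℕ) < cnt g (g i) := (le_iff_lt_cnt hg (g i) i).1 le_rfl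
      rw [hw _ hgiv] at h1
      have := (le_iff_lt_cnt hg' (g i) i).2 h1
      omega
    · exact heq
    · exfalso
      have hgiv : g' i < v := lt_of_lt_of_le hgt hgi
      have h1 : (i : ℕ) < cnt g' (g' i) := (le_iff_lt_cnt hg' (g' i) i).1 le_rfl
      rw [← hw _ hgiv] at h1
      have := (le_iff_lt_cnt hg (g' i) i).2 h1
      omega
  · have h1 : g ⟨t, hts⟩ ≤ v := (le_iff_lt_cnt hg v ⟨t, hts⟩).2 (by simpa using hv)
    have h2 : ¬ g' ⟨t, hts⟩ ≤ v := by
      rw [le_iff_lt_cnt hg' v ⟨t, hts⟩]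
      simp
      omega
    omega

private lemma cnt_Gam {s : ℕ} (f : Fin s → ℕ) (v : ℕ) : cnt (Gam f) v = cnt f v :=
  cnt_comp_equiv f _ v

private lemma monotone_Gam {s : ℕ} (f : Fin s → ℕ) : Monotone (Gam f) :=
  Tuple.monotone_sort f

/-- if `a j - a i ≥ 2` then `x_{a + e_i - e_j} ≺_Γ x_a`. -/
theorem stmt6 (s d : ℕ) (a : Fin s → ℕ) (ha : ∑ i, a i = d)
    (i j : Fin s) (h : a i + 2 ≤ a j)
    (a' : Fin s → ℕ)
    (ha' : a' = fun k => if k = i then a k + 1 else if k = j then a k - 1 else a k) :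
    lexLt (Gam a) (Gam a') ∧ varGammaLt a' a := by
  have hij : i ≠ j := by rintro rfl; omega
  have hA : a' i = a i + 1 := by rw [ha']; simp
  have hB : a' j = a j - 1 := by rw [ha']; simp [hij.symm, Ne.symm hij]
  have hC : ∀ k, k ≠ i → k ≠ j → a' k = a k := by
    intro k hk1 hk2; rw [ha']; simp [hk1, hk2]
  have key : ∀ k, (a' k ≤ a i ↔ (k ≠ i ∧ a k ≤ a i)) := by
    intro k
    by_cases h1 : k = i
    · subst h1; simp; omega
    · by_cases h2 : k = j
      · subst h2; rw [hB]; simp [h1]; omega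
      · rw [hC k h1 h2]; simp [h1]
  have hv : cnt a' (a i) < cnt a (a i) := by
    have hfe : (Finset.univ.filter (fun k => a' k ≤ a i))
        = (Finset.univ.filter (fun k => a k ≤ a i)).erase i := by
      ext k
      simp only [Finset.mem_filter, Finset.mem_erase, Finset.mem_univ, true_and]
      rw [key k]
    have hmem : i ∈ Finset.univ.filter (fun k => a k ≤ a i) := by simp
    have hpos : 0 < cnt a (a i) := Finset.card_pos.2 ⟨i, hmem⟩
    unfold cnt
    rw [hfe, Finset.card_erase_of_mem hmem]
    unfold cnt at hpos
    omega
  have hw : ∀ w, w < a i → cnt a w = cnt a' w := by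
    intro w hwlt
    unfold cnt
    congr 1
    apply Finset.filter_congr
    intro k _
    by_cases h1 : k = i
    · subst h1; rw [hA]; constructor <;> omega
    · by_cases h2 : k = j
      · subst h2; rw [hB]; constructor <;> omega
      · rw [hC k h1 h2]
  have hlex : lexLt (Gam a) (Gam a') := by
    apply lexLt_of_cnt (monotone_Gam a) (monotone_Gam a') (a i)
    · rw [cnt_Gam, cnt_Gam]; exact hv
    · intro w hwlt; rw [cnt_Gam, cnt_Gam]; exact hw w hwlt
  exact ⟨hlex, Or.inl hlex⟩
end

section
/- Let I ⊂ S be a monomial ideal, ≺ any term order on R^[d], and G a Gröbner basis of ker φ_d with respect to ≺. Let L_≺(I) be the monomial ideal of R^[d] generated by all monomials in φ_d^{-1}(I) that do not lie in in_≺(ker φ_d), and M_≺(I) its minimal monomial generating set. Then G ∪ M_≺(I) is a Gröbner basis of φ_d^{-1}(I) with respect to ≺. -/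
open MvPolynomial

section auxLemmas
variable {sig K : Type*} [Field K]

theorem lead_spec (t : TermOrder sig) {f : MvPolynomial sig K} (hf : f ≠ 0) :
    t.lead f ∈ f.support ∧ ∀ v ∈ f.support, t.lo.le v (t.lead f) := by
  letI := t.lo
  have h : f.support.Nonempty :=
    Finset.nonempty_iff_ne_empty.mpr (fun h => hf (support_eq_empty.mp h))
  obtain ⟨b, hb⟩ := Finset.max_of_nonempty h
  have hl : t.lead f = b := by simp [TermOrder.lead, hb]
  rw [hl]
  refine ⟨Finset.mem_of_max hb, fun v hv => ?_⟩
  have := Finset.le_max hv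
  rw [hb] at this
  exact_mod_cast this

theorem lead_eq_of (t : TermOrder sig) {f : MvPolynomial sig K} {u : sig →₀ ℕ}
    (hu : u ∈ f.support) (hmax : ∀ v ∈ f.support, t.lo.le v u) : t.lead f = u := by
  have hf : f ≠ 0 := fun h => by simp [h] at hu
  obtain ⟨h1, h2⟩ := lead_spec t hf
  exact t.lo.le_antisymm _ _ (hmax _ h1) (h2 _ hu)

theorem lead_monomial (t : TermOrder sig) {m : sig →₀ ℕ} {c : K} (hc : c ≠ 0) :
    t.lead (monomial m c) = m := by
  classical
  apply lead_eq_of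
  · rw [mem_support_iff, coeff_monomial, if_pos rfl]; exact hc
  · intro v hv
    rw [mem_support_iff, coeff_monomial] at hv
    by_cases h : m = v
    · subst h; exact t.lo.le_refl m
    · rw [if_neg h] at hv; exact absurd rfl hv

theorem initialIdeal_mono (t : TermOrder sig) {I J : Ideal (MvPolynomial sig K)}
    (h : I ≤ J) : initialIdeal t I ≤ initialIdeal t J := by
  apply Ideal.span_mono
  rintro m ⟨f, hf, h0, e⟩
  exact ⟨f, h hf, h0, e⟩

end auxLemmas

/-- The exponent of `φ_d` applied to a monomial. -/
noncomputable def Amap {s d : ℕ} (v : Vd s d →₀ ℕ) : Fin s →₀ ℕ :=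
  v.sum fun a n => n • Finsupp.equivFunOnFinite.symm a.1

theorem prod_X_pow_eq (K : Type*) [Field K] {s d : ℕ} (a : Vd s d) :
    (∏ i, (X i : MvPolynomial (Fin s) K) ^ a.1 i) =
      monomial (Finsupp.equivFunOnFinite.symm a.1) 1 := by
  classical
  rw [← prod_X_pow_eq_monomial,
    ← Finset.prod_subset (Finset.subset_univ (Finsupp.equivFunOnFinite.symm a.1).support)
      (fun x _ hx => by rw [show (a.1 x : ℕ) = 0 from Finsupp.notMem_support_iff.mp hx, pow_zero])]
  apply Finset.prod_congr rfl
  intro i _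
  simp

theorem phi_monomial (K : Type*) [Field K] {s d : ℕ} (v : Vd s d →₀ ℕ) (c : K) :
    phi K s d (monomial v c) = monomial (Amap v) c := by
  classical
  have hp : (v.prod fun a n => (∏ i, (X i : MvPolynomial (Fin s) K) ^ a.1 i) ^ n)
      = v.prod fun a n => monomial (n • Finsupp.equivFunOnFinite.symm a.1) 1 := by
    apply Finsupp.prod_congr
    intro a _
    rw [prod_X_pow_eq, monomial_pow, one_pow]
  rw [phi, aeval_monomial, hp, algebraMap_eq, ← monomial_finsupp_sum_index, Amap]

theorem coeff_phi (K : Type*) [Field K] {s d : ℕ} (f : MvPolynomial (Vd s d) K)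
    (w : Fin s →₀ ℕ) :
    coeff w (phi K s d f) = ∑ v ∈ f.support, if Amap v = w then coeff v f else 0 := by
  classical
  conv_lhs => rw [f.as_sum, map_sum, coeff_sum]
  apply Finset.sum_congr rfl
  intro v _
  rw [phi_monomial, coeff_monomial]

/-- Key lemma: for a monomial ideal `I`, if `f ∈ φ⁻¹(I)` and the lead monomial of `f` is
not in the initial ideal of `ker φ`, then `φ` of that lead monomial lies in `I`. -/
theorem key_lemma (K : Type*) [Field K] {s d : ℕ} (t : TermOrder (Vd s d))
    {I : Ideal (MvPolynomial (Fin s) K)} {A : Set (Fin s →₀ ℕ)}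
    (hIA : I = Ideal.span ((fun m => monomial m (1 : K)) '' A))
    {f : MvPolynomial (Vd s d) K} (hf : f ≠ 0)
    (hfI : phi K s d f ∈ I)
    (hnot : (monomial (t.lead f) (1 : K)) ∉ initialIdeal t
      (RingHom.ker (phi K s d : MvPolynomial (Vd s d) K →+* MvPolynomial (Fin s) K))) :
    phi K s d (monomial (t.lead f) 1) ∈ I := by
  classical
  set u := t.lead f with hu
  obtain ⟨hu_mem, hu_max⟩ := lead_spec t hf
  set Fib := f.support.filter (fun v => Amap v = Amap u) with hFib
  set h : MvPolynomial (Vd s d) K := ∑ v ∈ Fib, monomial v (coeff v f) with hh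
  have hcoeffh : ∀ v, coeff v h = if v ∈ Fib then coeff v f else 0 := by
    intro v
    rw [hh, coeff_sum]
    simp_rw [coeff_monomial]
    exact Finset.sum_ite_eq' Fib v (fun w => coeff w f)
  have huFib : u ∈ Fib := Finset.mem_filter.mpr ⟨hu_mem, rfl⟩
  have hsupp : h.support ⊆ Fib := by
    intro v hv
    rw [mem_support_iff, hcoeffh] at hv
    by_contra hc
    rw [if_neg hc] at hv
    exact hv rfl
  have hcu : coeff u h = coeff u f := by rw [hcoeffh, if_pos huFib]
  set c : K := ∑ v ∈ Fib, coeff v f with hc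
  have hphih : phi K s d h = monomial (Amap u) c := by
    rw [hh, map_sum]
    rw [hc, map_sum]
    apply Finset.sum_congr rfl
    intro v hv
    rw [phi_monomial, (Finset.mem_filter.mp hv).2]
  by_cases hc0 : c = 0
  · exfalso
    apply hnot
    have hh0 : h ≠ 0 := by
      intro e
      have := hcu
      rw [e, coeff_zero] at this
      exact mem_support_iff.mp hu_mem this.symm
    have hker : h ∈ RingHom.ker
        (phi K s d : MvPolynomial (Vd s d) K →+* MvPolynomial (Fin s) K) := by
      rw [RingHom.mem_ker]
      show phi K s d h = 0
      rw [hphih, hc0, monomial_zero]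
    have hlead : t.lead h = u := by
      apply lead_eq_of
      · rw [mem_support_iff, hcu]; exact mem_support_iff.mp hu_mem
      · intro v hv
        exact hu_max v (Finset.mem_filter.mp (hsupp hv)).1
    exact Ideal.subset_span ⟨h, hker, hh0, by rw [hlead]⟩
  · have hcoef : coeff (Amap u) (phi K s d f) = c := by
      rw [coeff_phi, hc, hFib, Finset.sum_filter]
    have hmem : Amap u ∈ (phi K s d f).support :=
      mem_support_iff.mpr (by rw [hcoef]; exact hc0)
    rw [hIA] at hfI
    obtain ⟨si, hsi, hle⟩ := mem_ideal_span_monomial_image.mp hfI _ hmem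
    rw [phi_monomial, hIA]
    apply mem_ideal_span_monomial_image.mpr
    intro xi hxi
    rw [support_monomial, if_neg one_ne_zero, Finset.mem_singleton] at hxi
    exact ⟨si, hsi, hxi ▸ hle⟩


/-- if `G` is a Gröbner basis of `ker φ_d` and `M_≺(I)` is the minimal
monomial generating set of `L_≺(I)`, then `G ∪ M_≺(I)` is a Gröbner basis of `φ_d⁻¹(I)`. -/

theorem stmt11 (K : Type*) [Field K] (s d : ℕ)
    (t : TermOrder (Vd s d))
    (I : Ideal (MvPolynomial (Fin s) K))
    -- `I` is a monomial ideal
    (hI : ∃ A : Set ((Fin s) →₀ ℕ), I = Ideal.span ((fun m => monomial m (1 : K)) '' A))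
    (G : Set (MvPolynomial (Vd s d) K))
    (hG : IsGB t
      (RingHom.ker (phi K s d : MvPolynomial (Vd s d) K →+* MvPolynomial (Fin s) K)) G)
    -- `M` is a minimal monomial generating set of `L_≺(I)`
    (M : Set (MvPolynomial (Vd s d) K))
    (hM : M ⊆ { p | ∃ m : Vd s d →₀ ℕ, p = monomial m (1 : K) ∧
      phi K s d (monomial m 1) ∈ I ∧
      monomial m (1 : K) ∉ initialIdeal t
        (RingHom.ker (phi K s d : MvPolynomial (Vd s d) K →+* MvPolynomial (Fin s) K)) })
    (hMspan : Ideal.span M =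
      Ideal.span { p : MvPolynomial (Vd s d) K | ∃ m : Vd s d →₀ ℕ,
        p = monomial m (1 : K) ∧ phi K s d (monomial m 1) ∈ I ∧
        monomial m (1 : K) ∉ initialIdeal t
          (RingHom.ker (phi K s d : MvPolynomial (Vd s d) K →+* MvPolynomial (Fin s) K)) })
    (hMmin : ∀ p ∈ M, p ∉ Ideal.span (M \ {p})) :
    IsGB t (Ideal.comap (phi K s d : MvPolynomial (Vd s d) K →+* MvPolynomial (Fin s) K) I)
      (G ∪ M) := by
  classical
  obtain ⟨A, hIA⟩ := hI
  set kerphi := RingHom.ker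
    (phi K s d : MvPolynomial (Vd s d) K →+* MvPolynomial (Fin s) K) with hker
  set J := Ideal.comap
    (phi K s d : MvPolynomial (Vd s d) K →+* MvPolynomial (Fin s) K) I with hJ
  have hkerJ : kerphi ≤ J := by
    intro p hp
    rw [hJ, Ideal.mem_comap]
    rw [hker, RingHom.mem_ker] at hp
    rw [hp]
    exact I.zero_mem
  have hMJ : M ⊆ (J : Set (MvPolynomial (Vd s d) K)) := by
    intro p hp
    obtain ⟨m, rfl, hmI, -⟩ := hM hp
    rw [SetLike.mem_coe, hJ, Ideal.mem_comap]
    exact hmI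
  have hMimg : (fun g => monomial (t.lead g) (1 : K)) '' M = M := by
    rw [show M = id '' M from (Set.image_id M).symm]
    rw [Set.image_image]
    apply Set.image_congr
    intro p hp
    obtain ⟨m, rfl, -, -⟩ := hM hp
    simp [lead_monomial t (one_ne_zero (α := K))]
  constructor
  · rintro p (hp | hp)
    · exact hkerJ (hG.1 hp)
    · exact hMJ hp
  · rw [Set.image_union, Ideal.span_union, hMimg, ← hG.2]
    apply le_antisymm
    · rw [initialIdeal, Ideal.span_le]
      rintro p ⟨f, hfJ, hf0, rfl⟩
      by_cases hin : monomial (t.lead f) (1 : K) ∈ initialIdeal t kerphi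
      · exact Ideal.mem_sup_left hin
      · apply Ideal.mem_sup_right
        rw [hMspan]
        apply Ideal.subset_span
        refine ⟨t.lead f, rfl, ?_, hin⟩
        exact key_lemma K t hIA hf0 (Ideal.mem_comap.mp hfJ) hin
    · apply sup_le
      · exact initialIdeal_mono t hkerJ
      · rw [hMspan, Ideal.span_le]
        rintro p ⟨m, rfl, hmI, -⟩
        apply Ideal.subset_span
        refine ⟨monomial m 1, Ideal.mem_comap.mpr hmI, ?_, ?_⟩
        · intro e
          have := congrArg (coeff m) e
          rw [coeff_monomial, if_pos rfl, coeff_zero] at this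
          exact one_ne_zero this
        · rw [lead_monomial t (one_ne_zero (α := K))]
end
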